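/- arXiv:1702.08127 — 5 statements merged into one kernel-verified Lean document; each statement's English description precedes it below -/
import Mathlib

section
/- Let α be a real number with 0 < α < π. Then for every real η with 0 < η < 1, one has cos((2π−α)η) < cos(αη). -/
/-!
With `s = π η` and `t = (π - α) η` the two angles are `s + t` and `s - t`, and
`cos (s - t) - cos (s + t) = 2 sin s sin t`, which is positive because `s, t ∈ (0, π)`.
-/

open Real

theorem Real.cos_add_lt_cos_sub {s t : ℝ} (hs0 : 0 < s) (hsπ : s < π) (ht0 : 0 < t)
    (htπ : t < π) : cos (s + t) < cos (s - t) := by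
  have hsin : 0 < 2 * sin s * sin t := by
    have := sin_pos_of_pos_of_lt_pi hs0 hsπ
    have := sin_pos_of_pos_of_lt_pi ht0 htπ
    positivity
  have hdiff : cos (s - t) - cos (s + t) = 2 * sin s * sin t := by
    rw [cos_sub, cos_add]
    ring
  linarith

theorem cos_exterior_lt_cos_interior
    (α : ℝ) (hα0 : 0 < α) (hαπ : α < Real.pi)
    (η : ℝ) (hη0 : 0 < η) (hη1 : η < 1) :
    Real.cos ((2 * Real.pi - α) * η) < Real.cos (α * η) := by
  have hπη : π * η < π := by nlinarith [pi_pos]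
  have hdefect : (π - α) * η < π := by nlinarith
  have key := cos_add_lt_cos_sub (by positivity) hπη
    (mul_pos (sub_pos.2 hαπ) hη0) hdefect
  convert key using 2 <;> ring
end

section
/- Let α be a real number with 0 < α < π. Then for every real η with 0 < η ≤ 1, one has α·sin((2π−α)η) < (2π−α)·sin(αη). -/
open Real

theorem alpha_sin_exterior_lt
    (α : ℝ) (hα0 : 0 < α) (hαπ : α < Real.pi)
    (η : ℝ) (hη0 : 0 < η) (hη1 : η ≤ 1) :
    α * Real.sin ((2 * Real.pi - α) * η) < (2 * Real.pi - α) * Real.sin (α * η) := by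
  have hpi := Real.pi_pos
  set β := 2 * Real.pi - α with hβ
  have hβpos : 0 < β := by rw [hβ]; linarith
  set f : ℝ → ℝ := fun t => β * Real.sin (α * t) - α * Real.sin (β * t) with hfdef
  have hf : ∀ t : ℝ, HasDerivAt f
      (β * (Real.cos (α * t) * α) - α * (Real.cos (β * t) * β)) t := by
    intro t
    simpa [hfdef, Pi.sub_def] using ((((hasDerivAt_id t).const_mul α).sin).const_mul β).sub
      ((((hasDerivAt_id t).const_mul β).sin).const_mul α)
  have hmono : StrictMonoOn f (Set.Icc 0 1) := by
    apply strictMonoOn_of_deriv_pos (convex_Icc 0 1)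
    · exact Continuous.continuousOn (by continuity)
    · intro t ht
      rw [interior_Icc] at ht
      rw [(hf t).deriv]
      have h1 : β * (Real.cos (α * t) * α) - α * (Real.cos (β * t) * β)
          = α * β * (Real.cos (α * t) - Real.cos (β * t)) := by ring
      rw [h1]
      have h2 : Real.cos (α * t) - Real.cos (β * t)
          = -2 * Real.sin ((α * t + β * t) / 2) * Real.sin ((α * t - β * t) / 2) :=
        Real.cos_sub_cos _ _
      have hsum : (α * t + β * t) / 2 = Real.pi * t := by rw [hβ]; ring
      have hdiff : (α * t - β * t) / 2 = -((Real.pi - α) * t) := by rw [hβ]; ring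
      rw [hsum, hdiff, Real.sin_neg] at h2
      have hs1 : 0 < Real.sin (Real.pi * t) := by
        apply Real.sin_pos_of_pos_of_lt_pi
        · exact mul_pos hpi ht.1
        · nlinarith [ht.2]
      have hs2 : 0 < Real.sin ((Real.pi - α) * t) := by
        apply Real.sin_pos_of_pos_of_lt_pi
        · exact mul_pos (by linarith) ht.1
        · nlinarith [ht.2, ht.1]
      rw [h2]
      have := mul_pos (mul_pos hα0 hβpos) (mul_pos hs1 hs2)
      nlinarith
  have h0 : f 0 = 0 := by simp [hfdef]
  have hlt : f 0 < f η :=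
    hmono ⟨le_refl 0, zero_le_one⟩ ⟨le_of_lt hη0, hη1⟩ hη0
  rw [h0] at hlt
  simp only [hfdef] at hlt
  linarith
end

section
/- Let α be a real number with 0 < α < π. Then the function η ↦ F(η,α) is strictly increasing on the interval (0,1]: for all real η₁, η₂ with 0 < η₁ < η₂ ≤ 1, one has F(η₁,α) < F(η₂,α). -/
/-!
With `P = πη` and `A = αη` we have `(2π - α)η = 2P - A`, and the addition formulas give
`F η α = (s² - t²) / (s² + t²)` with `s = sin ((π - α) η)` and `t = sin (π η)`. This is an
increasing function of `s / t`, and `η ↦ sin (b η) / sin (a η)` increases for `0 < b < a`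
because its logarithmic derivative `(b η cot (b η) - a η cot (a η)) / η` is positive, `x cot x`
being decreasing on `(0, π)`. At `η = 1` we have `t = 0`, so `F = 1 > F η` for `η < 1`.
-/

open Real

/-- The dispersion function of the transmission problem at a corner of opening `α`. -/
noncomputable def F (η α : ℝ) : ℝ :=
  Real.sin (α * η) * Real.sin ((2 * Real.pi - α) * η) /
    (Real.cos (α * η) * Real.cos ((2 * Real.pi - α) * η) - 1)

namespace Real

theorem sin_mul_sin_two_mul_sub (A P : ℝ) :
    sin A * sin (2 * P - A) = sin P ^ 2 - sin (P - A) ^ 2 := by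
  have hA : sin A = sin P * cos (P - A) - cos P * sin (P - A) := by
    rw [← sin_sub, sub_sub_cancel]
  have hB : sin (2 * P - A) = sin P * cos (P - A) + cos P * sin (P - A) := by
    rw [← sin_add]; ring_nf
  rw [hA, hB]
  linear_combination sin P ^ 2 * sin_sq_add_cos_sq (P - A) - sin (P - A) ^ 2 * sin_sq_add_cos_sq P

theorem cos_mul_cos_two_mul_sub_sub_one (A P : ℝ) :
    cos A * cos (2 * P - A) - 1 = -(sin (P - A) ^ 2 + sin P ^ 2) := by
  have hA : cos A = cos P * cos (P - A) + sin P * sin (P - A) := by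
    rw [← cos_sub, sub_sub_cancel]
  have hB : cos (2 * P - A) = cos P * cos (P - A) - sin P * sin (P - A) := by
    rw [← cos_add]; ring_nf
  rw [hA, hB]
  linear_combination
    cos (P - A) ^ 2 * sin_sq_add_cos_sq P + (1 - sin P ^ 2) * sin_sq_add_cos_sq (P - A)

theorem strictAntiOn_mul_cos_div_sin :
    StrictAntiOn (fun x => x * cos x / sin x) (Set.Ioo 0 π) := by
  refine strictAntiOn_of_deriv_neg (convex_Ioo 0 π) ?_ fun x hx => ?_
  · exact ContinuousOn.div (by fun_prop) (by fun_prop) fun x hx =>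
      (sin_pos_of_pos_of_lt_pi hx.1 hx.2).ne'
  rw [interior_Ioo] at hx
  have hsin := sin_pos_of_pos_of_lt_pi hx.1 hx.2
  have hderiv : HasDerivAt (fun x => x * cos x / sin x)
      (((1 * cos x + x * -sin x) * sin x - x * cos x * cos x) / sin x ^ 2) x :=
    ((hasDerivAt_id x).mul (hasDerivAt_cos x)).div (hasDerivAt_sin x) hsin.ne'
  rw [hderiv.deriv]
  refine div_neg_of_neg_of_pos ?_ (pow_pos hsin 2)
  -- `sin x cos x = sin (2x) / 2 < x`
  have hsin_two := sin_lt (show 0 < 2 * x by linarith [hx.1])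
  rw [sin_two_mul] at hsin_two
  linear_combination hsin_two / 2 - x * sin_sq_add_cos_sq x

theorem strictMonoOn_sin_mul_div_sin_mul {a b : ℝ} (hb : 0 < b) (hba : b < a) :
    StrictMonoOn (fun x => sin (b * x) / sin (a * x)) (Set.Ioo 0 (π / a)) := by
  have ha : 0 < a := hb.trans hba
  refine strictMonoOn_of_deriv_pos (convex_Ioo 0 (π / a)) ?_ fun x hx => ?_
  · exact ContinuousOn.div (by fun_prop) (by fun_prop) fun x hx =>
      (sin_pos_of_pos_of_lt_pi (by positivity [hx.1]) ((lt_div_iff₀' ha).1 hx.2)).ne'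
  rw [interior_Ioo] at hx
  have hax : a * x < π := (lt_div_iff₀' ha).1 hx.2
  have hbx : b * x < a * x := by nlinarith [hx.1]
  have hsin_a := sin_pos_of_pos_of_lt_pi (by positivity [hx.1]) hax
  have hsin_b := sin_pos_of_pos_of_lt_pi (by positivity [hx.1]) (hbx.trans hax)
  have hderiv : HasDerivAt (fun x => sin (b * x) / sin (a * x))
      ((cos (b * x) * (b * 1) * sin (a * x) - sin (b * x) * (cos (a * x) * (a * 1))) /
        sin (a * x) ^ 2) x :=
    ((hasDerivAt_id' x).const_mul b).sin.div ((hasDerivAt_id' x).const_mul a).sin hsin_a.ne'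
  rw [hderiv.deriv]
  refine div_pos ?_ (pow_pos hsin_a 2)
  have hcot := strictAntiOn_mul_cos_div_sin ⟨by positivity [hx.1], hbx.trans hax⟩
    ⟨by positivity [hx.1], hax⟩ hbx
  rw [div_lt_div_iff₀ hsin_a hsin_b] at hcot
  nlinarith [hx.1]

theorem sin_mul_mul_sin_mul_lt {a b x y : ℝ} (hb : 0 < b) (hba : b < a) (hx : 0 < x)
    (hxy : x < y) (hy : y ≤ π / a) : sin (a * y) * sin (b * x) < sin (a * x) * sin (b * y) := by
  have ha : 0 < a := hb.trans hba
  have hay : a * y ≤ π := (le_div_iff₀' ha).1 hy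
  have hsin_ax : 0 < sin (a * x) :=
    sin_pos_of_pos_of_lt_pi (by positivity) ((mul_lt_mul_of_pos_left hxy ha).trans_le hay)
  have hsin_by : 0 < sin (b * y) := sin_pos_of_pos_of_lt_pi (by positivity [hx.trans hxy])
    ((mul_lt_mul_of_pos_right hba (hx.trans hxy)).trans_le hay)
  rcases hy.eq_or_lt with rfl | hy
  · rw [mul_div_cancel₀ _ ha.ne', sin_pi, zero_mul]
    positivity
  have hsin_ay : 0 < sin (a * y) := sin_pos_of_pos_of_lt_pi (by positivity [hx.trans hxy])
    ((lt_div_iff₀' ha).1 hy)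
  have hratio := strictMonoOn_sin_mul_div_sin_mul hb hba ⟨hx, hxy.trans hy⟩ ⟨hx.trans hxy, hy⟩ hxy
  rw [div_lt_div_iff₀ hsin_ax hsin_ay] at hratio
  linarith

end Real

theorem sq_sub_sq_div_sq_add_sq_lt {s₁ s₂ t₁ t₂ : ℝ} (hs₁ : 0 < s₁) (hs₂ : 0 < s₂)
    (hnonneg : 0 ≤ t₂ * s₁) (hlt : t₂ * s₁ < t₁ * s₂) :
    (s₁ ^ 2 - t₁ ^ 2) / (s₁ ^ 2 + t₁ ^ 2) < (s₂ ^ 2 - t₂ ^ 2) / (s₂ ^ 2 + t₂ ^ 2) := by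
  have hsq : (t₂ * s₁) ^ 2 < (t₁ * s₂) ^ 2 := pow_lt_pow_left₀ hlt hnonneg two_ne_zero
  rw [div_lt_div_iff₀ (by positivity) (by positivity)]
  linear_combination 2 * hsq

theorem F_eq_sin_sq (η α : ℝ) :
    F η α = (sin ((π - α) * η) ^ 2 - sin (π * η) ^ 2) /
      (sin ((π - α) * η) ^ 2 + sin (π * η) ^ 2) := by
  rw [F, show (2 * π - α) * η = 2 * (π * η) - α * η by ring, sin_mul_sin_two_mul_sub,
    cos_mul_cos_two_mul_sub_sub_one, show π * η - α * η = (π - α) * η by ring, div_neg,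
    ← neg_div, neg_sub]

theorem dispersion_strictMono
    (α : ℝ) (hα0 : 0 < α) (hαπ : α < Real.pi)
    (η₁ η₂ : ℝ) (h0 : 0 < η₁) (h12 : η₁ < η₂) (h21 : η₂ ≤ 1) :
    F η₁ α < F η₂ α := by
  have hβ : 0 < π - α := by linarith
  have hβπ : π - α < π := by linarith
  have hsin_β : ∀ η, 0 < η → η ≤ 1 → 0 < sin ((π - α) * η) := fun η hη hη1 =>
    sin_pos_of_pos_of_lt_pi (by positivity) (by nlinarith)
  have hs₁ := hsin_β η₁ h0 (h12.le.trans h21)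
  have hs₂ := hsin_β η₂ (h0.trans h12) h21
  have ht₂ : 0 ≤ sin (π * η₂) :=
    sin_nonneg_of_nonneg_of_le_pi (by positivity [h0.trans h12]) (by nlinarith [pi_pos])
  rw [F_eq_sin_sq, F_eq_sin_sq]
  exact sq_sub_sq_div_sq_add_sq_lt hs₁ hs₂ (mul_nonneg ht₂ hs₁.le)
    (sin_mul_mul_sin_mul_lt hβ hβπ h0 h12 (by rwa [div_self pi_ne_zero]))
end

section
/- Let α be a real number with 0 < α < π, set k₊ = −(2π−α)/α and k₋ = −α/(2π−α), and let k < 0 be a real number with k < k₊ or k₋ < k. Then there exists a unique real η with 0 < η < 1 such that F(η,α) = 2k/(k² + 1). -/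
open Real Filter Topology

lemma sin_pq (p q : ℝ) : sin (p - q) * sin (p + q) = sin p ^ 2 - sin q ^ 2 := by
  rw [sin_sub, sin_add]
  nlinarith [sin_sq_add_cos_sq p, sin_sq_add_cos_sq q]

lemma cos_pq (p q : ℝ) : cos (p - q) * cos (p + q) - 1 = -(sin p ^ 2 + sin q ^ 2) := by
  rw [cos_sub, cos_add]
  nlinarith [sin_sq_add_cos_sq p, sin_sq_add_cos_sq q]

lemma F_eq (η α : ℝ) :
    F η α = (sin ((π - α) * η) ^ 2 - sin (π * η) ^ 2) /
      (sin (π * η) ^ 2 + sin ((π - α) * η) ^ 2) := by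
  have h1 : α * η = π * η - (π - α) * η := by ring
  have h2 : (2 * π - α) * η = π * η + (π - α) * η := by ring
  rw [F, h1, h2, sin_pq, cos_pq, div_neg, ← neg_div, neg_sub]

lemma N_pos {c : ℝ} (hc0 : 0 < c) (hc1 : c < 1) {x : ℝ} (hx0 : 0 < x) (hxπ : x < π) :
    0 < c * cos (c * x) * sin x - sin (c * x) * cos x := by
  have hderiv : ∀ y : ℝ, HasDerivAt (fun y => c * cos (c * y) * sin y - sin (c * y) * cos y)
      ((1 - c ^ 2) * (sin (c * y) * sin y)) y := by
    intro y
    have hid : HasDerivAt (fun y : ℝ => c * y) c y := by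
      simpa using (hasDerivAt_id y).const_mul c
    have hs : HasDerivAt (fun y => sin (c * y)) (cos (c * y) * c) y :=
      (Real.hasDerivAt_sin (c * y)).comp y hid
    have hcc : HasDerivAt (fun y => cos (c * y)) (-sin (c * y) * c) y :=
      (Real.hasDerivAt_cos (c * y)).comp y hid
    have h1 : HasDerivAt (fun y => c * cos (c * y) * sin y)
        ((-sin (c * y) * c * c) * sin y + c * cos (c * y) * cos y) y := by
      have := ((hcc.const_mul c).mul (Real.hasDerivAt_sin y))
      exact this.congr_deriv (by ring)
    have h2 : HasDerivAt (fun y => sin (c * y) * cos y)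
        ((cos (c * y) * c) * cos y + sin (c * y) * (-sin y)) y :=
      hs.mul (Real.hasDerivAt_cos y)
    have := h1.sub h2
    exact this.congr_deriv (by ring)
  have hmono : StrictMonoOn (fun y => c * cos (c * y) * sin y - sin (c * y) * cos y)
      (Set.Icc 0 π) := by
    apply strictMonoOn_of_deriv_pos (convex_Icc 0 π)
    · apply Continuous.continuousOn
      continuity
    · intro y hy
      rw [interior_Icc, Set.mem_Ioo] at hy
      rw [(hderiv y).deriv]
      have h1 : 0 < sin (c * y) := sin_pos_of_pos_of_lt_pi (mul_pos hc0 hy.1)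
        (by nlinarith [hy.2, pi_pos])
      have h2 : 0 < sin y := sin_pos_of_pos_of_lt_pi hy.1 hy.2
      have hc2 : c ^ 2 < 1 := by nlinarith
      exact mul_pos (by linarith) (mul_pos h1 h2)
  have := hmono (Set.left_mem_Icc.mpr pi_pos.le)
    (Set.mem_Icc.mpr ⟨hx0.le, hxπ.le⟩) hx0
  simpa using this

lemma ratio_lt {c : ℝ} (hc0 : 0 < c) (hc1 : c < 1) {x y : ℝ}
    (hx : 0 < x) (hxy : x < y) (hy : y < π) :
    sin (c * x) * sin y < sin (c * y) * sin x := by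
  have hsin : ∀ z ∈ Set.Ioo (0:ℝ) π, sin z ≠ 0 := fun z hz =>
    (sin_pos_of_pos_of_lt_pi hz.1 hz.2).ne'
  have hmono : StrictMonoOn (fun z => sin (c * z) / sin z) (Set.Ioo 0 π) := by
    apply strictMonoOn_of_deriv_pos (convex_Ioo 0 π)
    · exact ContinuousOn.div (by fun_prop) continuous_sin.continuousOn hsin
    · intro z hz
      rw [interior_Ioo] at hz
      have hid : HasDerivAt (fun z : ℝ => c * z) c z := by
        simpa using (hasDerivAt_id z).const_mul c
      have hs : HasDerivAt (fun z => sin (c * z)) (cos (c * z) * c) z :=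
        (Real.hasDerivAt_sin (c * z)).comp z hid
      have hd : HasDerivAt (fun z => sin (c * z) / sin z)
          ((cos (c * z) * c * sin z - sin (c * z) * cos z) / sin z ^ 2) z :=
        hs.div (Real.hasDerivAt_sin z) (hsin z hz)
      rw [hd.deriv]
      have hnum := N_pos hc0 hc1 hz.1 hz.2
      have hsz : 0 < sin z := sin_pos_of_pos_of_lt_pi hz.1 hz.2
      have hz2 : 0 < sin z ^ 2 := by positivity
      apply div_pos (by nlinarith) hz2
  have hx' : x ∈ Set.Ioo (0:ℝ) π := ⟨hx, hxy.trans hy⟩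
  have hy' : y ∈ Set.Ioo (0:ℝ) π := ⟨hx.trans hxy, hy⟩
  have := hmono hx' hy' hxy
  have hsx : 0 < sin x := sin_pos_of_pos_of_lt_pi hx'.1 hx'.2
  have hsy : 0 < sin y := sin_pos_of_pos_of_lt_pi hy'.1 hy'.2
  simp only at this
  rw [div_lt_div_iff₀ hsx hsy] at this
  linarith

lemma F_strictMono {α : ℝ} (hα0 : 0 < α) (hαπ : α < π) :
    StrictMonoOn (fun η => F η α) (Set.Ioo 0 1) := by
  intro η₁ h₁ η₂ h₂ h12
  simp only [F_eq]
  set c : ℝ := (π - α) / π with hc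
  have hπ := pi_pos
  have hb : 0 < π - α := by linarith
  have hc0 : 0 < c := div_pos hb hπ
  have hc1 : c < 1 := (div_lt_one hπ).mpr (by linarith)
  have e1 : c * (π * η₁) = (π - α) * η₁ := by rw [hc]; field_simp
  have e2 : c * (π * η₂) = (π - α) * η₂ := by rw [hc]; field_simp
  have key := ratio_lt hc0 hc1 (mul_pos hπ h₁.1)
    (by nlinarith [h₁.1, h₂.2, sub_pos.mpr h12] : π * η₁ < π * η₂)
    (by nlinarith [h₂.2] : π * η₂ < π)
  rw [e1, e2] at key
  have ht₁ : 0 < sin (π * η₁) := sin_pos_of_pos_of_lt_pi (mul_pos hπ h₁.1) (by nlinarith [h₁.2])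
  have ht₂ : 0 < sin (π * η₂) := sin_pos_of_pos_of_lt_pi (mul_pos hπ h₂.1) (by nlinarith [h₂.2])
  have hs₁ : 0 < sin ((π - α) * η₁) := sin_pos_of_pos_of_lt_pi (mul_pos hb h₁.1)
    (by nlinarith [h₁.2])
  have hs₂ : 0 < sin ((π - α) * η₂) := sin_pos_of_pos_of_lt_pi (mul_pos hb h₂.1)
    (by nlinarith [h₂.2])
  rw [div_lt_div_iff₀ (by positivity) (by positivity)]
  nlinarith [mul_pos hs₁ ht₂, mul_pos hs₂ ht₁, sq_nonneg (sin ((π-α)*η₁) * sin (π*η₂)),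
    mul_pos (mul_pos hs₁ ht₂) (mul_pos hs₂ ht₁)]

lemma F_one {α : ℝ} (hα0 : 0 < α) (hαπ : α < π) : F 1 α = 1 := by
  rw [F_eq]
  have hs : 0 < sin (π - α) := sin_pos_of_pos_of_lt_pi (by linarith) (by linarith [pi_pos])
  simp only [mul_one, Real.sin_pi, ne_eq, zero_pow, sub_zero, zero_add]
  rw [show (0:ℝ) ^ 2 = 0 by ring, sub_zero, zero_add, div_self (pow_ne_zero 2 hs.ne')]

lemma sin_slope (b : ℝ) :
    Tendsto (fun η : ℝ => sin (b * η) / η) (𝓝[≠] 0) (𝓝 b) := by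
  have hid : HasDerivAt (fun η : ℝ => b * η) b 0 := by
    simpa using (hasDerivAt_id (0:ℝ)).const_mul b
  have hd : HasDerivAt (fun η : ℝ => sin (b * η)) b 0 := by
    exact ((Real.hasDerivAt_sin (b * 0)).comp 0 hid).congr_deriv (by simp)
  rw [hasDerivAt_iff_tendsto_slope] at hd
  apply hd.congr'
  filter_upwards [self_mem_nhdsWithin] with η hη
  simp [slope_fun_def, div_eq_inv_mul]

lemma F_tendsto {α : ℝ} (hα0 : 0 < α) (hαπ : α < π) :
    Tendsto (fun η => F η α) (𝓝[>] 0)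
      (𝓝 (((π - α) ^ 2 - π ^ 2) / (π ^ 2 + (π - α) ^ 2))) := by
  have hπ := pi_pos
  have hmono : 𝓝[>] (0:ℝ) ≤ 𝓝[≠] 0 :=
    nhdsWithin_mono 0 (fun x hx => ne_of_gt hx)
  have h1 := (sin_slope (π - α)).mono_left hmono
  have h2 := (sin_slope π).mono_left hmono
  have hD : (0:ℝ) < π ^ 2 + (π - α) ^ 2 := by positivity
  have hlim : Tendsto (fun η : ℝ =>
      ((sin ((π - α) * η) / η) ^ 2 - (sin (π * η) / η) ^ 2) /
      ((sin (π * η) / η) ^ 2 + (sin ((π - α) * η) / η) ^ 2)) (𝓝[>] 0)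
      (𝓝 (((π - α) ^ 2 - π ^ 2) / (π ^ 2 + (π - α) ^ 2))) :=
    (((h1.pow 2).sub (h2.pow 2)).div ((h2.pow 2).add (h1.pow 2)) hD.ne')
  apply hlim.congr'
  filter_upwards [self_mem_nhdsWithin] with η hη
  have hη0 : (η:ℝ) ≠ 0 := ne_of_gt hη
  rw [F_eq]
  field_simp

lemma F_contOn {α : ℝ} (hα0 : 0 < α) (hαπ : α < π) {a : ℝ} (ha : 0 < a) :
    ContinuousOn (fun η => F η α) (Set.Icc a 1) := by
  have hb : 0 < π - α := by linarith
  have hden : ∀ η ∈ Set.Icc a 1, cos (α * η) * cos ((2 * π - α) * η) - 1 ≠ 0 := by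
    intro η hη
    have h1 : α * η = π * η - (π - α) * η := by ring
    have h2 : (2 * π - α) * η = π * η + (π - α) * η := by ring
    rw [h1, h2, cos_pq]
    have hs : 0 < sin ((π - α) * η) := sin_pos_of_pos_of_lt_pi
      (mul_pos hb (lt_of_lt_of_le ha hη.1))
      (by nlinarith [hη.2, pi_pos])
    intro h
    nlinarith [sq_nonneg (sin (π * η)), sq_nonneg (sin ((π - α) * η))]
  exact ContinuousOn.div (by fun_prop) (by fun_prop) hden

lemma L_lt {α k : ℝ} (hα0 : 0 < α) (hαπ : α < π) (hkneg : k < 0)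
    (hk : k < -(2 * π - α) / α ∨ -α / (2 * π - α) < k) :
    ((π - α) ^ 2 - π ^ 2) / (π ^ 2 + (π - α) ^ 2) < 2 * k / (k ^ 2 + 1) := by
  have hπ := pi_pos
  have hb : 0 < 2 * π - α := by linarith
  have hba : α < 2 * π - α := by linarith
  rw [div_lt_div_iff₀ (by positivity) (by positivity)]
  have hprod : 0 < (k * α + (2 * π - α)) * (k * (2 * π - α) + α) := by
    rcases hk with hk1 | hk2
    · have h1 : k * α + (2 * π - α) < 0 := by
        rw [lt_div_iff₀ hα0] at hk1; linarith
      have h2 : k * (2 * π - α) + α < 0 := by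
        nlinarith [mul_neg_of_neg_of_pos (show k - 1 < 0 by linarith)
          (show (0:ℝ) < (2 * π - α) - α by linarith)]
      exact mul_pos_of_neg_of_neg h1 h2
    · have h2 : 0 < k * (2 * π - α) + α := by
        rw [div_lt_iff₀ hb] at hk2; linarith
      have h1 : 0 < k * α + (2 * π - α) := by
        nlinarith [mul_pos_of_neg_of_neg (show k - 1 < 0 by linarith)
          (show α - (2 * π - α) < 0 by linarith)]
      exact mul_pos h1 h2
  nlinarith [hprod]

theorem dispersion_solvable_outside_critical
    (α : ℝ) (hα0 : 0 < α) (hαπ : α < Real.pi)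
    (k : ℝ) (hkneg : k < 0)
    (hk : k < -(2 * Real.pi - α) / α ∨ -α / (2 * Real.pi - α) < k) :
    ∃! η : ℝ, 0 < η ∧ η < 1 ∧ F η α = 2 * k / (k ^ 2 + 1) := by
  set c : ℝ := 2 * k / (k ^ 2 + 1) with hc
  have hcneg : c < 0 := div_neg_of_neg_of_pos (by linarith) (by positivity)
  have hL := L_lt hα0 hαπ hkneg hk
  have he : ∀ᶠ η in 𝓝[>] (0:ℝ), F η α < c :=
    (F_tendsto hα0 hαπ).eventually (eventually_lt_nhds hL)
  have h1' : ∀ᶠ η in 𝓝[>] (0:ℝ), η < 1 :=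
    eventually_nhdsWithin_of_eventually_nhds (eventually_lt_nhds zero_lt_one)
  have h2' : ∀ᶠ η in 𝓝[>] (0:ℝ), 0 < η := self_mem_nhdsWithin
  obtain ⟨η₀, hF0, h01, h00⟩ := (he.and (h1'.and h2')).exists
  have hcont := F_contOn hα0 hαπ h00
  have hmem : c ∈ Set.Ioo (F η₀ α) (F 1 α) := by
    rw [F_one hα0 hαπ]
    exact ⟨hF0, by linarith⟩
  obtain ⟨η, hηmem, hηeq'⟩ := intermediate_value_Ioo h01.le hcont hmem
  have hηeq : F η α = c := hηeq'
  have hη01 : η ∈ Set.Ioo (0:ℝ) 1 := ⟨h00.trans hηmem.1, hηmem.2⟩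
  refine ⟨η, ⟨hη01.1, hη01.2, hηeq⟩, ?_⟩
  rintro η' ⟨h'0, h'1, h'eq⟩
  exact (F_strictMono hα0 hαπ).injOn ⟨h'0, h'1⟩ hη01 (show F η' α = F η α by rw [h'eq, hηeq])
end

section
/- Let A be a real number with 0 < A < 1 and let k be a real number satisfying either −A < k < 0 or k < −1/A. Then there exist real numbers p and d such that (Ak − d + p)² − 4(Akp + d) < 0 and (Ak − d + A²p)² − 4A²(Akp + d) < 0. -/
/-!
Both discriminants have the form `(K - d + c p)² - 4c (K p + d)` with `K = A k` and weight
`c ∈ {1, A²}`. Taking `d = K + c p` makes the one at weight `c` equal to `-4c (p (K + c) + K)`,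
while the one at weight `c'` is `(c' - c)² p²` plus `c' / c` times it, so it suffices to make the
latter negative. As a quadratic in `p` it has discriminant `16 c' (K + c') (c' K + c²)`, which is
positive for `(c, c') = (1, A²)` when `-A < k < 0` and for `(c, c') = (A², 1)` when `k < -1/A`.
-/

theorem exists_neg_of_discrim_pos {F : Type*} [Field F] [LinearOrder F] [IsStrictOrderedRing F]
    {a b c : F} (h : 0 < discrim a b c) : ∃ x : F, a * (x * x) + b * x + c < 0 := by
  by_contra! hx
  exact h.not_ge (discrim_le_zero hx)

theorem exists_two_discrims_neg {K c c' : ℝ} (hc : 0 < c) (hc' : 0 < c')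
    (h : 0 < (K + c') * (c' * K + c ^ 2)) :
    ∃ p d : ℝ,
      (K - d + c * p) ^ 2 - 4 * c * (K * p + d) < 0 ∧
      (K - d + c' * p) ^ 2 - 4 * c' * (K * p + d) < 0 := by
  have hdiscrim : 0 < discrim ((c' - c) ^ 2) (-4 * c' * (K + c)) (-4 * c' * K) := by
    have : discrim ((c' - c) ^ 2) (-4 * c' * (K + c)) (-4 * c' * K)
        = 16 * c' * ((K + c') * (c' * K + c ^ 2)) := by
      unfold discrim; ring
    rw [this]; positivity
  obtain ⟨p, hp⟩ := exists_neg_of_discrim_pos hdiscrim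
  have hc'_disc : (K - (K + c * p) + c' * p) ^ 2 - 4 * c' * (K * p + (K + c * p)) < 0 := by
    linear_combination hp
  have hs : 0 < p * (K + c) + K := by nlinarith [sq_nonneg ((c' - c) * p)]
  exact ⟨p, K + c * p, by nlinarith [mul_pos hc hs], hc'_disc⟩

theorem exists_params_negative_discriminants
    (A : ℝ) (hA0 : 0 < A) (hA1 : A < 1)
    (k : ℝ) (hk : (-A < k ∧ k < 0) ∨ k < -1 / A) :
    ∃ p d : ℝ,
      (A * k - d + p) ^ 2 - 4 * (A * k * p + d) < 0 ∧
      (A * k - d + A ^ 2 * p) ^ 2 - 4 * A ^ 2 * (A * k * p + d) < 0 := by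
  have hA4 : A ^ 4 < 1 := pow_lt_one₀ hA0.le hA1 (by norm_num)
  rcases hk with ⟨hkA, hk0⟩ | hk
  · have h : 0 < (A * k + A ^ 2) * (A ^ 2 * (A * k) + 1 ^ 2) := by
      have : 0 < A * k + A ^ 2 := by nlinarith
      have : 0 < A ^ 2 * (A * k) + 1 ^ 2 := by nlinarith
      positivity
    obtain ⟨p, d, h1, h2⟩ := exists_two_discrims_neg one_pos (by positivity) h
    exact ⟨p, d, by simpa only [one_mul, mul_one] using h1, h2⟩
  · have hAk : A * k + 1 < 0 := by
      rw [lt_div_iff₀ hA0] at hk; linarith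
    have h : 0 < (A * k + 1) * (1 * (A * k) + (A ^ 2) ^ 2) := by
      apply mul_pos_of_neg_of_neg hAk
      nlinarith
    obtain ⟨p, d, h1, h2⟩ := exists_two_discrims_neg (by positivity) one_pos h
    exact ⟨p, d, by simpa only [one_mul, mul_one] using h2, h1⟩
end
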